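/- arXiv:1810.06902 — 5 statements merged into one kernel-verified Lean document; each statement's English description precedes it below -/
import Mathlib

section
/- Resonant processes converting $M-1$ waves to $1$ wave are forbidden in the FPUT system: for any positive integer $N$, any $p \ge 2$ and any integers $k_1,\dots,k_p$ with $1 \le k_j \le N-1$, the absolute value of $\sin(\pi(k_1 + \cdots + k_p)/N)$ is strictly less than $\sin(\pi k_1/N) + \cdots + \sin(\pi k_p/N)$; in particular the condition $\omega(k_1) + \cdots + \omega(k_p) = \omega(k)$ with $k \equiv k_1 + \cdots + k_p \pmod N$, $1 \le k \le N-1$, has no solutions. -/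
lemma sin_list_sum_abs_le : ∀ (l : List ℝ), (∀ x ∈ l, 0 < Real.sin x) →
    |Real.sin l.sum| ≤ (l.map Real.sin).sum := by
  intro l
  induction l with
  | nil => simp
  | cons x l ih =>
    intro h
    have hx : 0 < Real.sin x := h x (by simp)
    have hl := ih (fun y hy => h y (by simp [hy]))
    simp only [List.sum_cons, List.map_cons]
    have key : |Real.sin (x + l.sum)| ≤
        |Real.sin x| * |Real.cos l.sum| + |Real.cos x| * |Real.sin l.sum| := by
      rw [Real.sin_add]
      exact (abs_add_le _ _).trans (by rw [abs_mul, abs_mul])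
    have h1 : |Real.cos l.sum| ≤ 1 := Real.abs_cos_le_one _
    have h2 : |Real.cos x| ≤ 1 := Real.abs_cos_le_one _
    have h3 : |Real.sin x| = Real.sin x := abs_of_pos hx
    nlinarith [abs_nonneg (Real.sin l.sum), abs_nonneg (Real.sin x)]

lemma sin_abs_lt (x : ℝ) (hx : 0 < Real.sin x) (l : List ℝ) (hl : l ≠ [])
    (h : ∀ y ∈ l, 0 < Real.sin y) :
    |Real.sin (x + l.sum)| < Real.sin x + (l.map Real.sin).sum := by
  have hS : 0 < (l.map Real.sin).sum := by
    apply List.sum_pos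
    · intro y hy
      obtain ⟨z, hz, rfl⟩ := List.mem_map.mp hy
      exact h z hz
    · simp [hl]
  have hw : |Real.sin l.sum| ≤ (l.map Real.sin).sum := sin_list_sum_abs_le l h
  have key : |Real.sin (x + l.sum)| ≤
      Real.sin x * |Real.cos l.sum| + |Real.cos x| * |Real.sin l.sum| := by
    rw [Real.sin_add]
    refine (abs_add_le _ _).trans ?_
    rw [abs_mul, abs_mul, abs_of_pos hx]
  have h2 : |Real.cos x| ≤ 1 := Real.abs_cos_le_one _
  by_cases h0 : Real.sin l.sum = 0
  · have h1 : |Real.cos l.sum| ≤ 1 := Real.abs_cos_le_one _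
    rw [h0] at key
    simp at key
    nlinarith
  · have hcos : |Real.cos l.sum| < 1 := by
      nlinarith [Real.sin_sq_add_cos_sq l.sum, sq_abs (Real.cos l.sum),
        sq_abs (Real.sin l.sum), abs_pos.mpr h0, abs_nonneg (Real.cos l.sum)]
    nlinarith [abs_nonneg (Real.sin l.sum), abs_pos.mpr h0]

lemma fin_sin_strict (p : ℕ) (hp : 2 ≤ p) (f : Fin p → ℝ)
    (hf : ∀ j, 0 < Real.sin (f j)) :
    |Real.sin (∑ j, f j)| < ∑ j, Real.sin (f j) := by
  have hsum : (List.ofFn f).sum = ∑ j, f j := List.sum_ofFn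
  have hmap : ((List.ofFn f).map Real.sin).sum = ∑ j, Real.sin (f j) := by
    rw [List.map_ofFn, List.sum_ofFn]; rfl
  have hmem : ∀ y ∈ List.ofFn f, 0 < Real.sin y := by
    intro y hy
    obtain ⟨i, rfl⟩ := (List.mem_ofFn (f := f) (a := y)).mp hy
    exact hf i
  have hlen : (List.ofFn f).length = p := List.length_ofFn (f := f)
  rw [← hsum, ← hmap]
  rcases hLl : List.ofFn f with _ | ⟨a, t⟩
  · rw [hLl] at hlen; simp at hlen; omega
  · rw [hLl] at hlen hmem
    have ht : t ≠ [] := by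
      intro h; rw [h] at hlen; simp at hlen; omega
    simp only [List.sum_cons, List.map_cons]
    exact sin_abs_lt a (hmem a (by simp)) t ht (fun y hy => hmem y (by simp [hy]))

/-- Resonant processes converting `p ≥ 2` waves into one wave are forbidden. -/
theorem no_p_to_one_wave_resonance (N : ℕ) (hN : 2 ≤ N) (p : ℕ) (hp : 2 ≤ p)
    (k : Fin p → ℕ) (hk : ∀ j, 1 ≤ k j ∧ k j ≤ N - 1) :
    |Real.sin (Real.pi * ((∑ j, k j : ℕ) : ℝ) / N)| <
      ∑ j, Real.sin (Real.pi * (k j : ℝ) / N) ∧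
    ∀ m : ℕ, 1 ≤ m → m ≤ N - 1 → (∑ j, k j) % N = m % N →
      ∑ j, 2 * Real.sin (Real.pi * (k j : ℝ) / N) ≠ 2 * Real.sin (Real.pi * (m : ℝ) / N) := by
  have hNR : (0:ℝ) < N := by positivity
  have hfpos : ∀ j, 0 < Real.sin (Real.pi * (k j : ℝ) / N) := by
    intro j
    apply Real.sin_pos_of_pos_of_lt_pi
    · have : (0:ℝ) < (k j : ℝ) := by exact_mod_cast (hk j).1
      positivity
    · have hkj : (k j : ℝ) < N := by exact_mod_cast (by have := hk j; omega : k j < N)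
      rw [div_lt_iff₀ hNR]
      nlinarith [Real.pi_pos]
  have hsum_eq : Real.pi * ((∑ j, k j : ℕ) : ℝ) / N = ∑ j, Real.pi * (k j : ℝ) / N := by
    push_cast
    rw [Finset.mul_sum, Finset.sum_div]
  have hmain : |Real.sin (Real.pi * ((∑ j, k j : ℕ) : ℝ) / N)| <
      ∑ j, Real.sin (Real.pi * (k j : ℝ) / N) := by
    rw [hsum_eq]
    exact fin_sin_strict p hp _ hfpos
  refine ⟨hmain, ?_⟩
  intro m hm1 hm2 hmod heq
  have hmN : m < N := by omega
  have hmod' : (∑ j, k j) % N = m := by rwa [Nat.mod_eq_of_lt hmN] at hmod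
  set S := ∑ j, k j with hS
  have hdiv : N * (S / N) + m = S := by rw [← hmod']; exact Nat.div_add_mod S N
  have hSR : (S : ℝ) = N * (S / N : ℕ) + m := by exact_mod_cast hdiv.symm
  have hang : Real.pi * (S : ℝ) / N = Real.pi * (m : ℝ) / N + (S / N : ℕ) * Real.pi := by
    rw [hSR]
    field_simp
    ring
  have habs : |Real.sin (Real.pi * (S : ℝ) / N)| = Real.sin (Real.pi * (m : ℝ) / N) := by
    rw [hang, Real.sin_add_nat_mul_pi, abs_mul, abs_pow, abs_neg, abs_one, one_pow, one_mul]
    apply abs_of_nonneg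
    apply Real.sin_nonneg_of_nonneg_of_le_pi
    · positivity
    · have hmR : (m : ℝ) ≤ N := by exact_mod_cast hmN.le
      rw [div_le_iff₀ hNR]
      nlinarith [Real.pi_pos]
  have heq2 : ∑ j, Real.sin (Real.pi * (k j : ℝ) / N) = Real.sin (Real.pi * (m : ℝ) / N) := by
    have := heq
    rw [← Finset.mul_sum] at this
    linarith
  rw [habs, heq2] at hmain
  exact lt_irrefl _ hmain
end

section
/- The 5-wave resonance family from cyclotomic polynomials of length 3: let $3 \mid N$, and let integers $n, q$ satisfy $1 \le n \le N/3 - 1$, $1 \le q \le N-1$, and $n + N/3 + 2q \equiv 0 \pmod{N}$. Then the quintet $(n, 2N/3 + n, q; N/3 + n, N - q)$ satisfies both the momentum condition $n + (2N/3 + n) + q \equiv (N/3 + n) + (N - q) \pmod{N}$ and the frequency condition $\omega(n) + \omega(2N/3+n) + \omega(q) = \omega(N/3+n) + \omega(N-q)$, where $\omega(k) = 2\sin(\pi k/N)$. -/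
/-!
By sum-to-product, `sin x + sin (x + 2π/3) = 2 cos (π/3) sin (x + π/3) = sin (x + π/3)`; with
`x = π n / N` this matches the waves `n` and `2N/3 + n` against `N/3 + n`, while `ω (N - q) = ω q`
matches the remaining pair. The momentum condition is the hypothesis `n + N/3 + 2q ≡ 0` rearranged.
-/

open Real

theorem Real.sin_add_sin_add_two_pi_div_three (x : ℝ) :
    sin x + sin (x + 2 * π / 3) = sin (x + π / 3) := by
  rw [sin_add_sin, show (x + (x + 2 * π / 3)) / 2 = x + π / 3 by ring,
    show (x - (x + 2 * π / 3)) / 2 = -(π / 3) by ring, cos_neg, cos_pi_div_three]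
  ring

theorem Real.sin_pi_mul_sub_div_self (x y : ℝ) : sin (π * (y - x) / y) = sin (π * x / y) := by
  rcases eq_or_ne y 0 with rfl | hy
  · simp
  · rw [show π * (y - x) / y = π - π * x / y by field_simp, sin_pi_sub]

theorem Real.sin_pi_mul_div_add_two_thirds (x y : ℝ) :
    sin (π * x / (3 * y)) + sin (π * (2 * y + x) / (3 * y)) = sin (π * (y + x) / (3 * y)) := by
  rcases eq_or_ne y 0 with rfl | hy
  · simp
  · have h₂ : π * (2 * y + x) / (3 * y) = π * x / (3 * y) + 2 * π / 3 := by field_simp; ring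
    have h₁ : π * (y + x) / (3 * y) = π * x / (3 * y) + π / 3 := by field_simp; ring
    rw [h₂, h₁, sin_add_sin_add_two_pi_div_three]

theorem quintet_momentum (m n q : ℕ) (hq : q ≤ 3 * m) (h : (n + m + 2 * q) % (3 * m) = 0) :
    n + (2 * m + n) + q ≡ m + n + (3 * m - q) [MOD 3 * m] := by
  obtain ⟨k, hk⟩ := Nat.dvd_of_mod_eq_zero h
  have hk' : (n + m + 2 * q : ℤ) = 3 * m * k := by exact_mod_cast hk
  rw [Nat.modEq_iff_dvd]
  refine ⟨1 - (k : ℤ), ?_⟩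
  push_cast [hq]
  linear_combination -hk'

theorem quintet_frequency (m n q : ℕ) (hq : q ≤ 3 * m) :
    2 * sin (π * (n : ℝ) / (3 * m : ℕ)) + 2 * sin (π * ((2 * m + n : ℕ) : ℝ) / (3 * m : ℕ)) +
        2 * sin (π * (q : ℝ) / (3 * m : ℕ)) =
      2 * sin (π * ((m + n : ℕ) : ℝ) / (3 * m : ℕ)) +
        2 * sin (π * ((3 * m - q : ℕ) : ℝ) / (3 * m : ℕ)) := by
  push_cast [hq]
  rw [sin_pi_mul_sub_div_self]
  linear_combination 2 * sin_pi_mul_div_add_two_thirds n m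

theorem five_wave_resonance_family_general (N : ℕ) (h3 : 3 ∣ N)
    (n q : ℕ) (hq' : q ≤ N - 1)
    (hmod : (n + N / 3 + 2 * q) % N = 0) :
    n + (2 * N / 3 + n) + q ≡ (N / 3 + n) + (N - q) [MOD N] ∧
    2 * Real.sin (Real.pi * (n : ℝ) / N) +
        2 * Real.sin (Real.pi * ((2 * N / 3 + n : ℕ) : ℝ) / N) +
        2 * Real.sin (Real.pi * (q : ℝ) / N) =
      2 * Real.sin (Real.pi * ((N / 3 + n : ℕ) : ℝ) / N) +
        2 * Real.sin (Real.pi * ((N - q : ℕ) : ℝ) / N) := by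
  obtain ⟨m, rfl⟩ := h3
  have hq : q ≤ 3 * m := by omega
  rw [show 3 * m / 3 = m by omega, show 2 * (3 * m) / 3 = 2 * m by omega] at *
  exact ⟨quintet_momentum m n q hq hmod, quintet_frequency m n q hq⟩

/-- The 5-wave resonance family from cyclotomic polynomials of length 3:
for `3 ∣ N`, `1 ≤ n ≤ N/3 - 1`, `1 ≤ q ≤ N - 1` with `n + N/3 + 2q ≡ 0 (mod N)`,
the quintet `(n, 2N/3 + n, q; N/3 + n, N - q)` satisfies both the momentum and
frequency resonance conditions. -/
theorem five_wave_resonance_family (N : ℕ) (hN : 0 < N) (h3 : 3 ∣ N)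
    (n q : ℕ) (hn : 1 ≤ n) (hn' : n ≤ N / 3 - 1) (hq : 1 ≤ q) (hq' : q ≤ N - 1)
    (hmod : (n + N / 3 + 2 * q) % N = 0) :
    n + (2 * N / 3 + n) + q ≡ (N / 3 + n) + (N - q) [MOD N] ∧
    2 * Real.sin (Real.pi * (n : ℝ) / N) +
        2 * Real.sin (Real.pi * ((2 * N / 3 + n : ℕ) : ℝ) / N) +
        2 * Real.sin (Real.pi * (q : ℝ) / N) =
      2 * Real.sin (Real.pi * ((N / 3 + n : ℕ) : ℝ) / N) +
        2 * Real.sin (Real.pi * ((N - q : ℕ) : ℝ) / N) :=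
  five_wave_resonance_family_general N h3 n q hq' hmod
end

section
/- Characterization of trivially real completeness: every real FPUT polynomial is trivially real (i.e., the group $\mathcal{R}$ of real polynomials equals the group $\mathcal{T}$ of trivially real polynomials) if and only if $\phi(2N)/2 = N - \lceil N/2 \rceil$, and this holds if and only if $N$ is a power of $2$ or an odd prime. -/
/-!
Since `ζ ^ N = -1` and `‖ζ‖ = 1`, conjugation sends `ζ ^ k` to `-ζ ^ (N - k)`. Hence for
`deg p < N` the number `p(ζ) - conj p(ζ)` is the value at `ζ` of
`∑_{0 < k < N} (p_k + p_{N-k}) X ^ k`, while `p` is trivially real exactly when this polynomial is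
zero. As `ζ` is a primitive `2N`-th root of unity, its minimal polynomial over `ℤ` is `Φ_{2N}`, of
degree `φ(2N)`. If `φ(2N) ≥ N - 1`, a multiple of `X` of degree `< N` vanishing at `ζ` is zero, so
real polynomials are trivially real. If `φ(2N) < N - 1`, then `X Φ_{2N}` vanishes at `ζ`, but its
coefficients at `X` and `X ^ (N - 1)` are `1` and `0` or `1`, so it is not trivially real.
Finally `φ(2N) ≤ N` is even, and writing `N = 2 ^ k m` with `m` odd, `φ(2N) = 2 ^ k φ(m)` is at
least `N - 1` exactly when `m = 1`, or `k = 0` and `m` is prime.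
-/

namespace Nat

theorem totient_two_mul_two_pow_mul {k m : ℕ} (hm : Odd m) :
    φ (2 * (2 ^ k * m)) = 2 ^ k * φ m := by
  have hcop : Coprime (2 ^ (k + 1)) m :=
    (Nat.coprime_two_left.mpr hm).pow_left _
  rw [← mul_assoc, ← pow_succ', totient_mul hcop, totient_prime_pow_succ prime_two]
  simp

theorem totient_two_mul_le (N : ℕ) : φ (2 * N) ≤ N := by
  rcases N.eq_zero_or_pos with rfl | hN
  · simp
  obtain ⟨k, m, hm, rfl⟩ := exists_eq_two_pow_mul_odd hN.ne'
  rw [totient_two_mul_two_pow_mul hm]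
  exact Nat.mul_le_mul_left _ (totient_le m)

theorem totient_two_mul_eq_self_iff {N : ℕ} (hN : N ≠ 0) :
    φ (2 * N) = N ↔ ∃ b, N = 2 ^ b := by
  obtain ⟨k, m, hm, rfl⟩ := exists_eq_two_pow_mul_odd hN
  rw [totient_two_mul_two_pow_mul hm, Nat.mul_right_inj (by positivity)]
  constructor
  · intro h
    have hm1 : m ≤ 1 := by
      by_contra! h1
      exact (totient_lt m h1).ne h
    exact ⟨k, by interval_cases m <;> simp_all⟩
  · rintro ⟨b, hb⟩
    have : m ∣ 2 ^ b := hb ▸ Dvd.intro_left _ rfl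
    rw [(Nat.Coprime.pow_right b (Nat.coprime_two_right.mpr hm)).eq_one_of_dvd this, totient_one]

theorem totient_two_mul_eq_sub_one_iff {N : ℕ} (hN : Odd N) :
    φ (2 * N) = N - 1 ↔ N.Prime := by
  rw [totient_two_mul_of_odd hN, totient_eq_iff_prime hN.pos]

theorem sub_one_le_totient_two_mul_iff {N : ℕ} (hN : 2 ≤ N) :
    N - 1 ≤ φ (2 * N) ↔ (∃ b, N = 2 ^ b) ∨ (N.Prime ∧ Odd N) := by
  have hle := totient_two_mul_le N
  rcases N.even_or_odd with hev | hodd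
  · have hnodd : ¬ Odd N := Nat.not_odd_iff_even.mpr hev
    rw [← totient_two_mul_eq_self_iff (by omega)]
    simp only [hnodd, and_false, or_false]
    obtain ⟨a, ha⟩ : Even (φ (2 * N)) := totient_even (by omega)
    obtain ⟨b, hb⟩ := hev
    omega
  · have hlt : φ (2 * N) < N := totient_two_mul_of_odd hodd ▸ totient_lt N (by omega)
    have hpow : ¬ ∃ b, N = 2 ^ b := by
      rintro ⟨b, rfl⟩
      rcases b with _ | b
      · omega
      · exact Nat.not_even_iff_odd.mpr hodd (Nat.even_pow.mpr ⟨even_two, b.succ_ne_zero⟩)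
    rw [← totient_two_mul_eq_sub_one_iff hodd]
    simp only [hpow, hodd, and_true, false_or]
    omega

theorem totient_two_mul_div_two_eq_iff {N : ℕ} (hN : 2 ≤ N) :
    φ (2 * N) / 2 = N - (N + 1) / 2 ↔ N - 1 ≤ φ (2 * N) := by
  have hle := totient_two_mul_le N
  obtain ⟨a, ha⟩ : Even (φ (2 * N)) := totient_even (by omega)
  omega

end Nat

open Polynomial Finset ComplexConjugate Nat

section Ring

variable {R : Type*} [Ring R]

noncomputable def trivialPoly (N : ℕ) (lam : ℕ → R) : R[X] :=
  C (lam 0) + ∑ k ∈ Icc 1 ((N - 1) / 2), C (lam k) * (X ^ k - X ^ (N - k))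

theorem coeff_trivialPoly (N : ℕ) (lam : ℕ → R) (j : ℕ) :
    (trivialPoly N lam).coeff j =
      if j = 0 then lam 0
      else if j ≤ (N - 1) / 2 then lam j
      else if j < N ∧ N - j ≤ (N - 1) / 2 then -lam (N - j)
      else 0 := by
  have hrefl : ∀ k ∈ Icc 1 ((N - 1) / 2), (if j = N - k then lam k else 0) =
      if N - j = k then (if j < N then lam (N - j) else 0) else 0 := by
    intro k hk
    rw [mem_Icc] at hk
    by_cases h : j = N - k
    · rw [if_pos h, if_pos (by omega), if_pos (by omega)]
      congr 1; omega
    · rw [if_neg h]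
      split_ifs <;> first | rfl | omega
  simp only [trivialPoly, coeff_add, coeff_C, finsetSum_coeff, coeff_C_mul, coeff_sub,
    coeff_X_pow, mul_sub, mul_ite, mul_one, mul_zero, sum_sub_distrib]
  rw [sum_congr rfl hrefl, sum_ite_eq, sum_ite_eq]
  simp only [mem_Icc]
  split_ifs <;> first | omega | simp

/-- Twice the symmetric part of `p`, without constant term: its coefficient at `X ^ k` is
`p_k + p_{N-k}` for `0 < k < N`. The correction term vanishes at any `ζ` with `ζ ^ N = -1`. -/
noncomputable def symmPart (N : ℕ) (p : R[X]) : R[X] :=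
  p + reflect N p - C (p.coeff 0) * (1 + X ^ N)

theorem coeff_symmPart {N : ℕ} {p : R[X]} (hp : p.natDegree < N) (k : ℕ) :
    (symmPart N p).coeff k = if 0 < k ∧ k < N then p.coeff k + p.coeff (N - k) else 0 := by
  have hvan : ∀ i, N ≤ i → p.coeff i = 0 := fun i hi => coeff_eq_zero_of_natDegree_lt (by omega)
  simp only [symmPart, coeff_sub, coeff_add, coeff_reflect, coeff_C_mul, coeff_one, coeff_X_pow]
  rcases lt_or_ge N k with hNk | hkN
  · rw [revAt_eq_self_of_lt hNk, hvan k hNk.le]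
    split_ifs <;> first | omega | simp
  · rw [revAt_le hkN]
    split_ifs <;> first | omega | simp_all

theorem symmPart_eq_zero_iff {N : ℕ} {p : R[X]} (hp : p.natDegree < N) :
    symmPart N p = 0 ↔ ∀ k, 0 < k → k < N → p.coeff k + p.coeff (N - k) = 0 := by
  simp only [Polynomial.ext_iff, coeff_symmPart hp, coeff_zero, ite_eq_right_iff, and_imp]

end Ring

def IsTriviallyReal (N : ℕ) (p : ℤ[X]) : Prop :=
  ∃ lam : ℕ → ℤ, p = trivialPoly N lam

theorem isTriviallyReal_iff {N : ℕ} (hN : 0 < N) {p : ℤ[X]} :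
    IsTriviallyReal N p ↔
      p.natDegree < N ∧ ∀ k, 0 < k → k < N → p.coeff k + p.coeff (N - k) = 0 := by
  constructor
  · rintro ⟨lam, rfl⟩
    have hdeg : (trivialPoly N lam).natDegree ≤ N - 1 :=
      natDegree_le_iff_coeff_eq_zero.mpr fun j hj => by
        rw [coeff_trivialPoly]
        split_ifs <;> omega
    refine ⟨by omega, fun k hk0 hkN => ?_⟩
    rw [coeff_trivialPoly, coeff_trivialPoly, Nat.sub_sub_self hkN.le]
    split_ifs <;> omega
  · rintro ⟨hdeg, hanti⟩
    refine ⟨p.coeff, ext fun j => ?_⟩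
    rw [coeff_trivialPoly]
    split_ifs with h0 hlow hhigh
    · rw [h0]
    · rfl
    · have := hanti j (by omega) hhigh.1
      omega
    · by_cases hj : j < N
      · have := hanti j (by omega) hj
        rw [show N - j = j by omega] at this
        omega
      · exact coeff_eq_zero_of_natDegree_lt (by omega)

theorem conj_aeval_eq_neg_aeval_reflect {N : ℕ} {ζ : ℂ} (hζ : ζ ^ N = -1) {p : ℤ[X]}
    (hp : p.natDegree ≤ N) : conj (aeval ζ p) = -aeval ζ (reflect N p) := by
  have hN : N ≠ 0 := by rintro rfl; norm_num at hζ
  have hnorm : ‖ζ‖ = 1 :=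
    (pow_eq_one_iff_of_nonneg (norm_nonneg ζ) hN).mp (by rw [← norm_pow, hζ, norm_neg, norm_one])
  have hinv : conj ζ = ζ⁻¹ := (Complex.inv_eq_conj hnorm).symm
  have hζ0 : ζ ≠ 0 := norm_ne_zero_iff.mp (by rw [hnorm]; exact one_ne_zero)
  let : Invertible ζ⁻¹ := invertibleOfNonzero (inv_ne_zero hζ0)
  have key := eval₂_reflect_mul_pow (algebraMap ℤ ℂ) ζ⁻¹ N p hp
  rw [invOf_eq_inv, inv_inv, inv_pow, hζ, inv_neg, inv_one, mul_neg_one] at key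
  rw [← hinv, ← aeval_def, ← aeval_def] at key
  rw [key]
  exact (aeval_algHom_apply (starRingEnd ℂ).toIntAlgHom ζ p).symm

theorem aeval_symmPart {N : ℕ} {ζ : ℂ} (hζ : ζ ^ N = -1) {p : ℤ[X]} (hp : p.natDegree ≤ N) :
    aeval ζ (symmPart N p) = aeval ζ p - conj (aeval ζ p) := by
  rw [conj_aeval_eq_neg_aeval_reflect hζ hp, symmPart]
  simp [hζ]

theorem exists_aeval_eq_ofReal_iff {N : ℕ} {ζ : ℂ} (hζ : ζ ^ N = -1) {p : ℤ[X]}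
    (hp : p.natDegree ≤ N) : (∃ r : ℝ, aeval ζ p = r) ↔ aeval ζ (symmPart N p) = 0 := by
  rw [aeval_symmPart hζ hp, sub_eq_zero, eq_comm, Complex.conj_eq_iff_real]

theorem IsPrimitiveRoot.pow_half_eq_neg_one {K : Type*} [CommRing K] [NoZeroDivisors K]
    {N : ℕ} {ζ : K} (hζ : IsPrimitiveRoot ζ (2 * N)) (hN : 0 < N) : ζ ^ N = -1 :=
  IsPrimitiveRoot.eq_neg_one_of_two_right <| by
    simpa [hN.ne'] using hζ.pow_of_dvd hN.ne' (dvd_mul_left N 2)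

theorem IsPrimitiveRoot.eq_zero_of_coeff_zero_of_natDegree_le_totient {K : Type*} [Field K]
    [CharZero K] {n : ℕ} {ζ : K} (hζ : IsPrimitiveRoot ζ n) (hn : 0 < n) {g : ℤ[X]}
    (h0 : g.coeff 0 = 0) (hdeg : g.natDegree ≤ φ n) (hg : aeval ζ g = 0) : g = 0 := by
  have hX : X * g.divX = g := by simpa [h0] using X_mul_divX_add g
  suffices hdivX : g.divX = 0 by rw [← hX, hdivX, mul_zero]
  by_contra hne
  rw [← hX, map_mul, aeval_X] at hg
  have hmin := minpoly.IsIntegrallyClosed.degree_le_of_ne_zero hne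
    ((mul_eq_zero.mp hg).resolve_left (hζ.ne_zero hn.ne'))
  rw [degree_eq_natDegree (minpoly.ne_zero (hζ.isIntegral hn)), degree_eq_natDegree hne,
    Nat.cast_le, natDegree_divX_eq_natDegree_tsub_one] at hmin
  have := hζ.totient_le_degree_minpoly
  have := totient_pos.mpr hn
  omega

def IsRealFPUT (N : ℕ) (ζ : ℂ) (p : ℤ[X]) : Prop :=
  p.natDegree < N ∧ ∃ r : ℝ, aeval ζ p = r

theorem IsTriviallyReal.isRealFPUT {N : ℕ} (hN : 0 < N) {ζ : ℂ} (hζ : ζ ^ N = -1) {p : ℤ[X]}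
    (h : IsTriviallyReal N p) : IsRealFPUT N ζ p := by
  obtain ⟨hdeg, hanti⟩ := (isTriviallyReal_iff hN).mp h
  refine ⟨hdeg, (exists_aeval_eq_ofReal_iff hζ hdeg.le).mpr ?_⟩
  rw [(symmPart_eq_zero_iff hdeg).mpr hanti, map_zero]

theorem IsRealFPUT.isTriviallyReal {N : ℕ} (hN : 0 < N) {ζ : ℂ} (hζ : IsPrimitiveRoot ζ (2 * N))
    (hφ : N - 1 ≤ φ (2 * N)) {p : ℤ[X]} (h : IsRealFPUT N ζ p) : IsTriviallyReal N p := by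
  obtain ⟨hdeg, hreal⟩ := h
  have hsymm : symmPart N p = 0 := by
    refine hζ.eq_zero_of_coeff_zero_of_natDegree_le_totient (by omega) ?_ ?_
      ((exists_aeval_eq_ofReal_iff (hζ.pow_half_eq_neg_one hN) hdeg.le).mp hreal)
    · simp [coeff_symmPart hdeg]
    · exact natDegree_le_iff_coeff_eq_zero.mpr fun k hk => by
        rw [coeff_symmPart hdeg, if_neg (by omega)]
  exact (isTriviallyReal_iff hN).mpr ⟨hdeg, (symmPart_eq_zero_iff hdeg).mp hsymm⟩

theorem exists_isRealFPUT_not_isTriviallyReal {N : ℕ} {ζ : ℂ} (hζ : IsPrimitiveRoot ζ (2 * N))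
    (hφ : φ (2 * N) < N - 1) : ∃ p, IsRealFPUT N ζ p ∧ ¬ IsTriviallyReal N p := by
  have hN : 0 < N := Nat.pos_of_ne_zero (by rintro rfl; simp at hφ)
  have hpos : 0 < φ (2 * N) := totient_pos.mpr (by omega)
  have hdeg : (cyclotomic (2 * N) ℤ).natDegree = φ (2 * N) := natDegree_cyclotomic _ _
  refine ⟨X * cyclotomic (2 * N) ℤ, ⟨?_, 0, ?_⟩, fun ht => ?_⟩
  · rw [natDegree_X_mul (cyclotomic_ne_zero _ _), hdeg]
    omega
  · rw [map_mul, cyclotomic_eq_minpoly hζ (by omega), minpoly.aeval, mul_zero, Complex.ofReal_zero]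
  · have hanti := ((isTriviallyReal_iff hN).mp ht).2 1 one_pos (by omega)
    have h1 : (X * cyclotomic (2 * N) ℤ).coeff 1 = 1 := by
      rw [← zero_add 1, coeff_X_mul, cyclotomic_coeff_zero _ (by omega)]
    have hlast : (X * cyclotomic (2 * N) ℤ).coeff (N - 1) = 0 ∨
        (X * cyclotomic (2 * N) ℤ).coeff (N - 1) = 1 := by
      rw [show N - 1 = N - 2 + 1 by omega, coeff_X_mul]
      rcases (show φ (2 * N) < N - 2 ∨ φ (2 * N) = N - 2 by omega) with hlt | heq
      · exact Or.inl (coeff_eq_zero_of_natDegree_lt (by omega))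
      · exact Or.inr (by rw [← heq, ← hdeg]; exact (cyclotomic.monic _ ℤ).coeff_natDegree)
    omega

theorem setOf_isRealFPUT_eq_iff {N : ℕ} (hN : 0 < N) {ζ : ℂ} (hζ : IsPrimitiveRoot ζ (2 * N)) :
    {p | IsRealFPUT N ζ p} = {p | IsTriviallyReal N p} ↔ N - 1 ≤ φ (2 * N) := by
  refine ⟨fun h => ?_, fun hφ => Set.ext fun p =>
    ⟨IsRealFPUT.isTriviallyReal hN hζ hφ, IsTriviallyReal.isRealFPUT hN (hζ.pow_half_eq_neg_one hN)⟩⟩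
  by_contra! hlt
  obtain ⟨p, hR, hT⟩ := exists_isRealFPUT_not_isTriviallyReal hζ hlt
  exact hT (h.subset hR)

open Polynomial in
/-- Every real FPUT polynomial is trivially real iff `φ(2N)/2 = N - ⌈N/2⌉`,
which holds iff `N` is a power of `2` or an odd prime. -/
theorem trivially_real_complete_iff (N : ℕ) (hN : 2 ≤ N) (ζ : ℂ)
    (hζ : ζ = Complex.exp (Real.pi * Complex.I / N)) :
    ({p : ℤ[X] | p.natDegree < N ∧ ∃ r : ℝ, Polynomial.aeval ζ p = (r : ℂ)} =
      {p : ℤ[X] | ∃ lam : ℕ → ℤ,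
        p = C (lam 0) + ∑ k ∈ Finset.Icc 1 ((N - 1) / 2), C (lam k) * (X ^ k - X ^ (N - k))}
      ↔ (2 * N).totient / 2 = N - (N + 1) / 2) ∧
    ((2 * N).totient / 2 = N - (N + 1) / 2 ↔
      (∃ b : ℕ, N = 2 ^ b) ∨ (N.Prime ∧ Odd N)) := by
  have hprim : IsPrimitiveRoot ζ (2 * N) := by
    convert Complex.isPrimitiveRoot_exp (2 * N) (by omega) using 1
    rw [hζ]
    congr 1
    push_cast
    field_simp
  rw [Nat.totient_two_mul_div_two_eq_iff hN]
  exact ⟨setOf_isRealFPUT_eq_iff (by omega) hprim, Nat.sub_one_le_totient_two_mul_iff hN⟩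
end

section
/- Parity of wave number for $N = 2p$: let $N = 2p$ with $p$ an odd prime, and let $\rho(x) = \sum_{k=1}^{N-1} \rho_k x^k$ be an integer polynomial with zero constant term such that $\rho(\zeta) \in \mathbb{R}$ (where $\zeta = e^{i\pi/N}$) and $\rho'(1) \equiv 0 \pmod N$. Then $M(\rho) := \sum_{k=1}^{N-1} |\rho_k|$ is even. -/
open Polynomial

private lemma zmod2_cases (y : ZMod 2) : y = 0 ∨ y = 1 := by
  have h : ∀ z : ZMod 2, z = 0 ∨ z = 1 := by decide
  exact h y

private lemma natAbs_cast_zmod2 (a : ℤ) : ((a.natAbs : ZMod 2)) = ((a : ZMod 2)) := by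
  rcases Int.natAbs_eq a with h | h
  · conv_rhs => rw [h]
    rw [Int.cast_natCast]
  · conv_rhs => rw [h]
    rw [Int.cast_neg, Int.cast_natCast, CharTwo.neg_eq]

private lemma deriv_eval_one {ρ : Polynomial ℤ} {n : ℕ} (h : ρ.natDegree < n) :
    ρ.derivative.eval 1 = ∑ k ∈ Finset.range n, (k : ℤ) * ρ.coeff k := by
  have h1 : ρ.derivative.natDegree < n :=
    lt_of_le_of_lt (le_trans (Polynomial.natDegree_derivative_le ρ) (Nat.sub_le _ _)) h
  rw [Polynomial.eval_eq_sum_range' h1]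
  have hc : ∀ i ∈ Finset.range n,
      ρ.derivative.coeff i * (1:ℤ) ^ i = ((i+1 : ℕ) : ℤ) * ρ.coeff (i+1) := by
    intro i _
    rw [Polynomial.coeff_derivative]
    push_cast; ring
  rw [Finset.sum_congr rfl hc]
  have h2 := Finset.sum_range_succ' (fun k => (k : ℤ) * ρ.coeff k) n
  have h3 : ∑ k ∈ Finset.range (n+1), (k:ℤ) * ρ.coeff k
      = ∑ k ∈ Finset.range n, (k:ℤ) * ρ.coeff k := by
    rw [Finset.sum_range_succ, Polynomial.coeff_eq_zero_of_natDegree_lt h, mul_zero, add_zero]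
  push_cast at h2
  push_cast
  linarith [h2, h3]

open Polynomial in
/-- Parity of the wave number for `N = 2p`: if `ρ` is an integer polynomial of
degree `< N` with zero constant term, `ρ(ζ) ∈ ℝ` for `ζ = exp(iπ/N)`, and
`ρ'(1) ≡ 0 (mod N)`, then `M(ρ) = ∑ |ρ_k|` is even. -/
theorem wave_number_even_for_two_p (p : ℕ) (hp : p.Prime) (hodd : Odd p)
    (N : ℕ) (hN : N = 2 * p) (ζ : ℂ)
    (hζ : ζ = Complex.exp (Real.pi * Complex.I / N)) (ρ : ℤ[X])
    (hdeg : ρ.natDegree < N) (hconst : ρ.coeff 0 = 0)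
    (hreal : ∃ r : ℝ, Polynomial.aeval ζ ρ = (r : ℂ))
    (hmom : (N : ℤ) ∣ ρ.derivative.eval 1) :
    Even (∑ k ∈ Finset.range N, (ρ.coeff k).natAbs) := by
  subst hN
  haveI : Fact (Nat.Prime 2) := ⟨Nat.prime_two⟩
  haveI : Fact (Nat.Prime p) := ⟨hp⟩
  have hp0 : 0 < p := hp.pos
  have hp2 : ¬ (2 ∣ p) := by
    have := Nat.odd_iff.mp hodd; omega
  have hdeg' : ρ.natDegree < 2*p := hdeg
  -- ζ is a primitive (4p)-th root of unity
  have hpc : ((p:ℂ)) ≠ 0 := Nat.cast_ne_zero.mpr hp0.ne'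
  have hζ' : ζ = Complex.exp (2 * Real.pi * Complex.I / ((4*p : ℕ) : ℂ)) := by
    rw [hζ]; congr 1
    have h1 : (2*(p:ℂ)) ≠ 0 := mul_ne_zero (by norm_num) hpc
    have h2 : (4*(p:ℂ)) ≠ 0 := mul_ne_zero (by norm_num) hpc
    push_cast
    rw [div_eq_div_iff h1 h2]; ring
  have hprim : IsPrimitiveRoot ζ (4*p) := by
    rw [hζ']; exact Complex.isPrimitiveRoot_exp _ (by omega)
  have hz4p : ζ ^ (4*p) = 1 := hprim.pow_eq_one
  have hconj : (starRingEnd ℂ) ζ = ζ⁻¹ := by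
    have hc : (starRingEnd ℂ) ((Real.pi : ℂ) * Complex.I / ((2*p : ℕ) : ℂ))
        = -((Real.pi : ℂ) * Complex.I / ((2*p : ℕ) : ℂ)) := by
      rw [map_div₀, map_mul, Complex.conj_I, Complex.conj_ofReal, map_natCast]
      ring
    rw [hζ, ← Complex.exp_conj, hc, Complex.exp_neg]
  -- the reflected polynomial Q and D = ρ - Q
  set Q : ℤ[X] := ∑ k ∈ Finset.range (2*p), C (ρ.coeff k) * X ^ (4*p - k) with hQ
  set D : ℤ[X] := ρ - Q with hD
  have hQcoeff : ∀ j, j ≤ 2*p → Q.coeff j = 0 := by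
    intro j hj
    rw [hQ, Polynomial.finset_sum_coeff]
    apply Finset.sum_eq_zero
    intro k hk
    have hk' : k < 2*p := Finset.mem_range.mp hk
    rw [Polynomial.coeff_C_mul, Polynomial.coeff_X_pow, if_neg (by omega), mul_zero]
  have hDcoeff : ∀ j, j < 2*p → D.coeff j = ρ.coeff j := by
    intro j hj
    rw [hD, Polynomial.coeff_sub, hQcoeff j (by omega), sub_zero]
  have hQdeg : Q.natDegree ≤ 4*p - 1 := by
    apply Polynomial.natDegree_sum_le_of_forall_le
    intro k hk
    have hk' : k < 2*p := Finset.mem_range.mp hk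
    rcases Nat.eq_zero_or_pos k with rfl | hk1
    · rw [hconst]; simp
    · refine le_trans (Polynomial.natDegree_C_mul_le _ _) ?_
      rw [Polynomial.natDegree_X_pow]; omega
  have hDdeg : D.natDegree ≤ 4*p - 1 := by
    refine le_trans (Polynomial.natDegree_sub_le _ _) (max_le (by omega) hQdeg)
  -- aeval at ζ
  obtain ⟨r, hr⟩ := hreal
  have haρ : Polynomial.aeval ζ ρ = ∑ k ∈ Finset.range (2*p), (ρ.coeff k : ℂ) * ζ ^ k := by
    rw [Polynomial.aeval_eq_sum_range' hdeg']
    exact Finset.sum_congr rfl (fun k _ => zsmul_eq_mul _ _)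
  have haQ : Polynomial.aeval ζ Q = (starRingEnd ℂ) (Polynomial.aeval ζ ρ) := by
    rw [hQ, map_sum, haρ, map_sum]
    apply Finset.sum_congr rfl
    intro k hk
    have hk' : k < 2*p := Finset.mem_range.mp hk
    rw [map_mul, map_pow, Polynomial.aeval_C, Polynomial.aeval_X,
      map_mul (starRingEnd ℂ), map_pow (starRingEnd ℂ), hconj]
    congr 1
    · simp
    · have h1 : ζ ^ (4*p - k) * ζ ^ k = 1 := by
        rw [← pow_add, Nat.sub_add_cancel (by omega)]; exact hz4p
      rw [inv_pow]
      exact eq_inv_of_mul_eq_one_left h1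
  have haD : Polynomial.aeval ζ D = 0 := by
    rw [hD, map_sub, haQ, hr, Complex.conj_ofReal, sub_self]
  -- cyclotomic divisibility
  have hmp : Polynomial.cyclotomic (4*p) ℤ = minpoly ℤ ζ :=
    Polynomial.cyclotomic_eq_minpoly hprim (by omega)
  have hdvd : Polynomial.cyclotomic (4*p) ℤ ∣ D := by
    rw [hmp]
    exact minpoly.isIntegrallyClosed_dvd (hprim.isIntegral (by omega)) haD
  obtain ⟨B, hB⟩ := hdvd
  -- evaluations of D
  have hρeval1 : ρ.eval 1 = ∑ k ∈ Finset.range (2*p), ρ.coeff k := by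
    rw [Polynomial.eval_eq_sum_range' hdeg']; simp
  have hQeval1 : Q.eval 1 = ∑ k ∈ Finset.range (2*p), ρ.coeff k := by
    rw [hQ, Polynomial.eval_finset_sum]
    apply Finset.sum_congr rfl
    intro k _; simp
  have hD1 : D.eval 1 = 0 := by
    rw [hD, Polynomial.eval_sub, hρeval1, hQeval1, sub_self]
  have hQevalm1 : Q.eval (-1) = ρ.eval (-1) := by
    rw [hQ, Polynomial.eval_finset_sum, Polynomial.eval_eq_sum_range' hdeg' (-1)]
    apply Finset.sum_congr rfl
    intro k hk
    have hk' : k < 2*p := Finset.mem_range.mp hk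
    simp only [Polynomial.eval_mul, Polynomial.eval_C, Polynomial.eval_pow,
      Polynomial.eval_X]
    congr 1
    rcases Nat.even_or_odd k with he | ho
    · obtain ⟨t, rfl⟩ := he
      rw [Even.neg_one_pow ⟨t, rfl⟩, Even.neg_one_pow ⟨2*p - t, by omega⟩]
    · obtain ⟨t, rfl⟩ := ho
      rw [Odd.neg_one_pow ⟨2*p - t - 1, by omega⟩, Odd.neg_one_pow ⟨t, rfl⟩]
  have hDm1 : D.eval (-1) = 0 := by
    rw [hD, Polynomial.eval_sub, hQevalm1, sub_self]
  -- derivative of D at 1 is divisible by 4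
  have hQ' : Q.derivative.eval 1 = ∑ k ∈ Finset.range (2*p), ((4*p - k : ℕ) : ℤ) * ρ.coeff k := by
    rw [hQ, Polynomial.derivative_sum, Polynomial.eval_finset_sum]
    apply Finset.sum_congr rfl
    intro k _
    rw [Polynomial.derivative_C_mul_X_pow]
    simp [mul_comm]
  have hD'1 : (4:ℤ) ∣ D.derivative.eval 1 := by
    have h1 : ρ.derivative.eval 1 = ∑ k ∈ Finset.range (2*p), (k:ℤ) * ρ.coeff k :=
      deriv_eval_one hdeg'
    have h2 : D.derivative.eval 1 = 2 * ρ.derivative.eval 1 - 4*p * ρ.eval 1 := by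
      rw [hD, Polynomial.derivative_sub, Polynomial.eval_sub, hQ', hρeval1, h1,
        Finset.mul_sum, Finset.mul_sum, ← Finset.sum_sub_distrib, ← Finset.sum_sub_distrib]
      apply Finset.sum_congr rfl
      intro k hk
      have hk' : k < 2*p := Finset.mem_range.mp hk
      have hc : ((4*p - k : ℕ) : ℤ) = 4*p - k := by
        rw [Nat.cast_sub (by omega)]; push_cast; ring
      rw [hc]; ring
    obtain ⟨s, hs⟩ := hmom
    push_cast at hs
    rw [h2, hs]
    exact ⟨p * s - p * ρ.eval 1, by push_cast; ring⟩
  -- cyclotomic mod 2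
  have hmapΦ : (Polynomial.cyclotomic (4*p) ℤ).map (Int.castRingHom (ZMod 2))
      = (Polynomial.cyclotomic p (ZMod 2))^2 := by
    rw [Polynomial.map_cyclotomic]
    rw [show 4*p = 2^2 * p by ring,
      Polynomial.cyclotomic_mul_prime_pow_eq (ZMod 2) hp2 (by norm_num)]
    norm_num
  -- eval of cyclotomic at ±1 is odd
  have hpz : ((p : ZMod 2)) = 1 := by
    have h1 : p % 2 = 1 := Nat.odd_iff.mp hodd
    rw [← ZMod.natCast_mod p 2, h1, Nat.cast_one]
  have hΦcast : ∀ x : ℤ,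
      (Int.castRingHom (ZMod 2)) ((Polynomial.cyclotomic (4*p) ℤ).eval x) = 1 := by
    intro x
    have h1 : (Int.castRingHom (ZMod 2)) ((Polynomial.cyclotomic (4*p) ℤ).eval x)
        = ((Polynomial.cyclotomic (4*p) ℤ).map (Int.castRingHom (ZMod 2))).eval
            ((Int.castRingHom (ZMod 2)) x) := by
      rw [Polynomial.eval_map]
      exact (Polynomial.eval₂_hom _ _).symm
    rw [h1, hmapΦ, Polynomial.eval_pow, Polynomial.cyclotomic_prime (ZMod 2) p,
      Polynomial.eval_finset_sum]
    simp only [Polynomial.eval_pow, Polynomial.eval_X]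
    have hy : ∀ y : ZMod 2, (∑ i ∈ Finset.range p, y ^ i) ^ 2 = 1 := by
      intro y
      rcases zmod2_cases y with rfl | rfl
      · rw [Finset.sum_eq_single 0]
        · norm_num
        · intro b _ hb
          rw [zero_pow hb]
        · intro h0; exact absurd (Finset.mem_range.mpr hp0) h0
      · simp only [one_pow]
        rw [Finset.sum_const, Finset.card_range, nsmul_eq_mul, mul_one, hpz]
        norm_num
    exact hy _
  have hΦodd : ∀ x : ℤ, ¬ (2:ℤ) ∣ (Polynomial.cyclotomic (4*p) ℤ).eval x := by
    intro x hdvd2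
    obtain ⟨c, hc⟩ := hdvd2
    have h1 := hΦcast x
    rw [hc, map_mul] at h1
    have h2 : (Int.castRingHom (ZMod 2)) (2:ℤ) = 0 := by
      rw [map_ofNat]; exact CharTwo.two_eq_zero
    rw [h2, zero_mul] at h1
    exact one_ne_zero h1.symm
  have hΦ1ne : (Polynomial.cyclotomic (4*p) ℤ).eval 1 ≠ 0 := by
    intro h; exact hΦodd 1 (h ▸ dvd_zero 2)
  have hΦm1ne : (Polynomial.cyclotomic (4*p) ℤ).eval (-1) ≠ 0 := by
    intro h; exact hΦodd (-1) (h ▸ dvd_zero 2)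
  -- B(1) = 0, B(-1) = 0
  have hBe1 : B.eval 1 = 0 := by
    have := hD1
    rw [hB, Polynomial.eval_mul] at this
    exact (mul_eq_zero.mp this).resolve_left hΦ1ne
  have hBem1 : B.eval (-1) = 0 := by
    have := hDm1
    rw [hB, Polynomial.eval_mul] at this
    exact (mul_eq_zero.mp this).resolve_left hΦm1ne
  -- factor B = (X-1)(X+1)V
  obtain ⟨B1, hB1f⟩ := Polynomial.dvd_iff_isRoot.mpr hBe1
  have hB1m1 : B1.eval (-1) = 0 := by
    have := hBem1
    rw [hB1f, Polynomial.eval_mul, Polynomial.eval_sub, Polynomial.eval_X,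
      Polynomial.eval_C] at this
    have h2 : (-1 - 1 : ℤ) = -2 := by norm_num
    rw [h2] at this
    linarith [this]
  obtain ⟨V, hVf⟩ := Polynomial.dvd_iff_isRoot.mpr hB1m1
  have hBV : B = (X - C (1:ℤ)) * ((X - C (-1:ℤ)) * V) := by rw [hB1f, hVf]
  -- V(1) is even
  have hBd1 : B.derivative.eval 1 = 2 * V.eval 1 := by
    rw [hBV]
    simp only [Polynomial.derivative_mul, Polynomial.derivative_sub, Polynomial.derivative_X,
      Polynomial.derivative_C, Polynomial.eval_add, Polynomial.eval_mul, Polynomial.eval_sub,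
      Polynomial.eval_X, Polynomial.eval_C, Polynomial.eval_one, Polynomial.eval_zero,
      sub_zero, Polynomial.eval_ofNat]
    ring
  have hDd1 : D.derivative.eval 1
      = (Polynomial.cyclotomic (4*p) ℤ).eval 1 * (2 * V.eval 1) := by
    rw [hB, Polynomial.derivative_mul, Polynomial.eval_add, Polynomial.eval_mul,
      Polynomial.eval_mul, hBe1, mul_zero, zero_add, hBd1]
  have hV1 : (2:ℤ) ∣ V.eval 1 := by
    rw [hDd1] at hD'1
    obtain ⟨c, hc⟩ := hD'1
    set a := (Polynomial.cyclotomic (4*p) ℤ).eval 1 with ha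
    have h2 : a * V.eval 1 = 2 * c := by linarith [hc]
    have h3 : (2:ℤ) ∣ a * V.eval 1 := ⟨c, h2⟩
    rcases (Int.prime_two.dvd_mul.mp h3) with h | h
    · exact absurd h (hΦodd 1)
    · exact h
  -- degree of V
  have hΦne : (Polynomial.cyclotomic (4*p) ℤ) ≠ 0 := Polynomial.cyclotomic_ne_zero _ ℤ
  have hXC1 : (X - C (1:ℤ)) ≠ 0 := Polynomial.X_sub_C_ne_zero 1
  have hXCm1 : (X - C (-1:ℤ)) ≠ 0 := Polynomial.X_sub_C_ne_zero (-1)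
  have hVdeg : V.natDegree < 2*p := by
    by_cases hV0 : V = 0
    · rw [hV0, Polynomial.natDegree_zero]; omega
    · have hBne : B ≠ 0 := by
        rw [hBV]
        exact mul_ne_zero hXC1 (mul_ne_zero hXCm1 hV0)
      have hDne : D ≠ 0 := by
        rw [hB]; exact mul_ne_zero hΦne hBne
      have h1 : D.natDegree = (2*p - 2) + B.natDegree := by
        rw [hB, Polynomial.natDegree_mul hΦne hBne, Polynomial.natDegree_cyclotomic]
        congr 1
        rw [show 4*p = 4 * p by rfl, Nat.totient_mul]
        · rw [Nat.totient_prime hp, show Nat.totient 4 = 2 by decide]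
          omega
        · exact Nat.Coprime.pow_left 2 ((Nat.coprime_primes Nat.prime_two hp).mpr
            (by intro h; exact hp2 (h ▸ dvd_refl 2)))
      have h2 : B.natDegree = 2 + V.natDegree := by
        rw [hBV, Polynomial.natDegree_mul hXC1 (mul_ne_zero hXCm1 hV0),
          Polynomial.natDegree_mul hXCm1 hV0, Polynomial.natDegree_X_sub_C,
          Polynomial.natDegree_X_sub_C]
        omega
      have := hDdeg
      rw [h1, h2] at this
      omega
  -- pass to ZMod 2
  set φ : ℤ →+* ZMod 2 := Int.castRingHom (ZMod 2) with hφ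
  set W : (ZMod 2)[X] := V.map φ with hW
  have key : D.map φ = (X ^ (2*p) + 1) * W := by
    have h2z : (2 : (ZMod 2)[X]) = 0 := CharTwo.two_eq_zero
    have hgeom : (Polynomial.cyclotomic p (ZMod 2)) * (X - 1) = X^p - 1 := by
      rw [Polynomial.cyclotomic_prime]; exact geom_sum_mul _ p
    have hsq : ((X:(ZMod 2)[X])^p - 1)^2 = X^(2*p) + 1 := by
      linear_combination (-(X:(ZMod 2)[X])^p) * h2z
    have hφ1 : φ (1:ℤ) = 1 := map_one φ
    have hφm1 : φ (-1:ℤ) = 1 := by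
      rw [map_neg, map_one, CharTwo.neg_eq]
    rw [hB, Polynomial.map_mul, hmapΦ, hBV, Polynomial.map_mul, Polynomial.map_mul,
      Polynomial.map_sub, Polynomial.map_sub, Polynomial.map_X, Polynomial.map_C,
      Polynomial.map_C, hφ1, hφm1, Polynomial.C_1]
    calc (Polynomial.cyclotomic p (ZMod 2))^2 * ((X - 1) * ((X - 1) * W))
        = ((Polynomial.cyclotomic p (ZMod 2)) * (X - 1))^2 * W := by ring
      _ = ((X:(ZMod 2)[X])^p - 1)^2 * W := by rw [hgeom]
      _ = (X^(2*p) + 1) * W := by rw [hsq]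
  have hWdeg : W.natDegree < 2*p :=
    lt_of_le_of_lt Polynomial.natDegree_map_le hVdeg
  have hsum : ∑ k ∈ Finset.range (2*p), ((ρ.coeff k : ZMod 2)) = 0 := by
    have e1 : ∀ k ∈ Finset.range (2*p), ((ρ.coeff k : ZMod 2)) = W.coeff k := by
      intro k hk
      have hk' := Finset.mem_range.mp hk
      have hx : ((X:(ZMod 2)[X])^(2*p) * W).coeff k = 0 := by
        rw [mul_comm, Polynomial.coeff_mul_X_pow']
        rw [if_neg (by omega)]
      have h2 : (D.map φ).coeff k = W.coeff k := by
        rw [key, add_mul, one_mul, Polynomial.coeff_add, hx, zero_add]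
      rw [← h2, Polynomial.coeff_map, hDcoeff k hk']
      rfl
    rw [Finset.sum_congr rfl e1]
    have h3 : ∑ k ∈ Finset.range (2*p), W.coeff k = W.eval 1 := by
      rw [Polynomial.eval_eq_sum_range' hWdeg]; simp
    rw [h3, hW, Polynomial.eval_one_map]
    obtain ⟨c, hc⟩ := hV1
    rw [hc, map_mul]
    have h4 : φ (2:ℤ) = 0 := by
      rw [map_ofNat]; exact CharTwo.two_eq_zero
    rw [h4, zero_mul]
  have hcast : ((∑ k ∈ Finset.range (2*p), (ρ.coeff k).natAbs : ℕ) : ZMod 2) = 0 := by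
    rw [Nat.cast_sum]
    rw [Finset.sum_congr rfl (fun k _ => natAbs_cast_zmod2 (ρ.coeff k))]
    exact hsum
  obtain ⟨c, hc⟩ := (ZMod.natCast_eq_zero_iff _ 2).mp hcast
  exact ⟨c, by omega⟩
end

section
/- Lower bound on non-pairing-off resonances for $N = 2p$: let $N = 2p$ with $p$ an odd prime, and let $\rho(x) = \sum_{k=1}^{N-1}\rho_k x^k$ be an integer polynomial with $\rho(\zeta) \in \mathbb{R}$ ($\zeta = e^{i\pi/N}$) and $\rho'(1) \equiv 0 \pmod{N}$. If $\rho$ is not trivially real (i.e., not of the form $\sum_{k=1}^{p-1}\lambda_k(x^k - x^{N-k})$), then $M(\rho) = \sum_k |\rho_k| \ge N$. -/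
/-!
Put `σ = ρ + X ^ (2p) ρ(1/X)` (that is, `ρ + reflect (2p) ρ`). Because `ζ̄ = ζ⁻¹` and
`ζ ^ (2p) = -1`, we get `σ(ζ) = ρ(ζ) - conj ρ(ζ)`, which vanishes when `ρ(ζ)` is real. Now
`ζ` is a primitive `4p`-th root of unity, `deg σ ≤ 2p - 1 = φ(4p) + 1` and `σ(0) = 0`, so
`σ = a X Φ_{4p}` for some integer `a`. Since `Φ_{4p}(x) = Φ_{2p}(x²)`, `Φ_{4p}(±1) = 1`, and
evaluating at `±1` gives `a = ρ(1) - ρ(-1) ≡ 2ρ'(1) ≡ 0 (mod 4)`. If `a = 0`, then `ρ` is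
trivially real. Evaluating at `i`, where `Φ_{4p}(i) = Φ_{2p}(-1) = p`, gives
`|a| p = |ρ(i) - ρ(-i)| ≤ 2 M(ρ)`.
-/

open Polynomial Finset

theorem aeval_reflect {R A : Type*} [CommRing R] [CommRing A] [Algebra R A] {x y : A}
    (hxy : x * y = 1) {N : ℕ} {f : R[X]} (hf : f.natDegree ≤ N) :
    aeval x (reflect N f) = x ^ N * aeval y f := by
  let : Invertible y := ⟨x, hxy, by rw [mul_comm, hxy]⟩
  have h : aeval x (reflect N f) * y ^ N = aeval y f := eval₂_reflect_mul_pow _ y N f hf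
  rw [← h, mul_left_comm, ← mul_pow, hxy, one_pow, mul_one]

theorem natDegree_add_reflect_lt {R : Type*} [Semiring R] {f : R[X]} {N : ℕ}
    (hdeg : f.natDegree < N) (h0 : f.coeff 0 = 0) : (f + reflect N f).natDegree < N := by
  have : (f + reflect N f).natDegree ≤ N - 1 := by
    rw [natDegree_le_iff_coeff_eq_zero]
    intro m hm
    rw [coeff_add, coeff_reflect, coeff_eq_zero_of_natDegree_lt (by omega), zero_add]
    rcases eq_or_lt_of_le (show N ≤ m by omega) with rfl | hlt
    · rwa [revAt_le le_rfl, Nat.sub_self]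
    · rw [← revAtFun_eq, revAtFun, if_neg hlt.not_ge]
      exact coeff_eq_zero_of_natDegree_lt (by omega)
  omega

theorem aeval_add_reflect_eq_zero {ρ : ℤ[X]} {N : ℕ} {z : ℂ} (hz : ‖z‖ = 1)
    (hzN : z ^ N = -1) (hdeg : ρ.natDegree ≤ N) (hreal : ∃ r : ℝ, aeval z ρ = r) :
    aeval z (ρ + reflect N ρ) = 0 := by
  obtain ⟨r, hr⟩ := hreal
  have hconj : z * starRingEnd ℂ z = 1 := by rw [RCLike.mul_conj, hz]; norm_num
  rw [map_add, aeval_reflect hconj hdeg, hzN,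
    show starRingEnd ℂ z = (starRingEnd ℂ).toIntAlgHom z from rfl, aeval_algHom_apply]
  simp [hr]

theorem eq_sum_X_pow_sub_X_pow_of_add_reflect_eq_zero {n : ℕ} {f : ℤ[X]}
    (hdeg : f.natDegree < 2 * n) (h : f + reflect (2 * n) f = 0) :
    f = ∑ k ∈ Icc 1 (n - 1), C (f.coeff k) * (X ^ k - X ^ (2 * n - k)) := by
  have hzero : ∀ m, 2 * n ≤ m → f.coeff m = 0 := fun m hm =>
    coeff_eq_zero_of_natDegree_lt (by omega)
  have hanti : ∀ m ≤ 2 * n, f.coeff m = -f.coeff (2 * n - m) := fun m hm => by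
    have := congrArg (coeff · m) h
    simp only [coeff_add, coeff_reflect, coeff_zero, revAt_le hm] at this
    omega
  ext m
  have hcond : ∀ k ∈ Icc 1 (n - 1), (m = 2 * n - k ↔ 2 * n - m = k) := fun k hk => by
    rw [mem_Icc] at hk; omega
  simp only [finsetSum_coeff, coeff_C_mul, coeff_sub, coeff_X_pow, mul_sub, sum_sub_distrib,
    mul_ite, mul_one, mul_zero, sum_ite_eq]
  rw [sum_congr rfl fun k hk => if_congr (hcond k hk) rfl rfl, sum_ite_eq]
  simp only [mem_Icc]
  split_ifs with hlow hhigh hhigh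
  · omega
  · rw [sub_zero]
  · rw [zero_sub, hanti m (by omega)]
  · obtain rfl | hmn | hm : m = 0 ∨ m = n ∨ 2 * n ≤ m := by omega
    · rw [hanti 0 (Nat.zero_le _), Nat.sub_zero, hzero _ le_rfl, neg_zero, sub_zero]
    · have := hanti m (by omega)
      rw [show 2 * n - m = m by omega] at this
      omega
    · rw [hzero m hm, sub_zero]

theorem exists_eq_C_mul_X_mul_of_dvd {R : Type*} [CommRing R] [IsDomain R] {f g : R[X]}
    (hdvd : f ∣ g) (hf0 : f.coeff 0 ≠ 0) (hg0 : g.coeff 0 = 0)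
    (hdeg : g.natDegree ≤ f.natDegree + 1) : ∃ a, g = C a * X * f := by
  obtain ⟨q, rfl⟩ := hdvd
  rcases eq_or_ne q 0 with rfl | hq
  · exact ⟨0, by simp⟩
  have hf : f ≠ 0 := fun h => hf0 (by simp [h])
  rw [natDegree_mul hf hq] at hdeg
  rw [mul_coeff_zero, mul_eq_zero, or_iff_right hf0] at hg0
  obtain ⟨a, rfl⟩ : ∃ a, q = C a * X := ⟨q.coeff 1, by
    conv_lhs => rw [eq_X_add_C_of_natDegree_le_one (by omega : q.natDegree ≤ 1)]
    rw [hg0, C_0, add_zero]⟩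
  exact ⟨a, by ring⟩

theorem four_dvd_eval_one_sub_eval_neg_one_sub_two_mul_derivative (f : ℤ[X]) :
    4 ∣ f.eval 1 - f.eval (-1) - 2 * f.derivative.eval 1 := by
  obtain ⟨k, hk⟩ := binomExpansion f 1 (-2)
  norm_num at hk
  exact ⟨-k, by rw [hk]; ring⟩

theorem norm_aeval_le_sum_natAbs {f : ℤ[X]} {N : ℕ} (hf : f.natDegree < N) {z : ℂ}
    (hz : ‖z‖ = 1) : ‖aeval z f‖ ≤ ∑ k ∈ range N, ((f.coeff k).natAbs : ℝ) := by
  rw [aeval_eq_sum_range' hf]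
  refine (norm_sum_le _ _).trans (sum_le_sum fun k _ => ?_)
  simp [hz]

theorem aeval_cyclotomic_four_mul {A : Type*} [CommRing A] (n : ℕ) (x : A) :
    aeval x (cyclotomic (4 * n) ℤ) = aeval (x ^ 2) (cyclotomic (2 * n) ℤ) := by
  rw [show 4 * n = 2 * n * 2 by ring,
    ← cyclotomic_expand_eq_cyclotomic Nat.prime_two (dvd_mul_right 2 n), expand_aeval]

theorem eval_cyclotomic_two_mul_mul_eval_cyclotomic {p : ℕ} (hp : p.Prime) (hodd : Odd p)
    {x : ℤ} (hx : x ^ 2 = 1) : (cyclotomic (2 * p) ℤ).eval x * (cyclotomic p ℤ).eval x = p := by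
  have : Fact p.Prime := ⟨hp⟩
  have h := congrArg (eval x) (cyclotomic_expand_eq_cyclotomic_mul Nat.prime_two
    (Nat.not_even_iff_odd.mpr hodd ∘ even_iff_two_dvd.mpr) ℤ)
  rw [expand_eval, hx, eval_mul, eval_one_cyclotomic_prime, mul_comm p] at h
  exact h.symm

theorem eval_one_cyclotomic_two_mul {p : ℕ} (hp : p.Prime) (hodd : Odd p) :
    (cyclotomic (2 * p) ℤ).eval 1 = 1 := by
  have : Fact p.Prime := ⟨hp⟩
  have h := eval_cyclotomic_two_mul_mul_eval_cyclotomic hp hodd (one_pow 2)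
  rw [eval_one_cyclotomic_prime (p := p)] at h
  exact (mul_eq_right₀ (Int.natCast_ne_zero.mpr hp.ne_zero)).mp h

theorem eval_neg_one_cyclotomic_two_mul {p : ℕ} (hp : p.Prime) (hodd : Odd p) :
    (cyclotomic (2 * p) ℤ).eval (-1) = p := by
  have : Fact p.Prime := ⟨hp⟩
  have h := eval_cyclotomic_two_mul_mul_eval_cyclotomic hp hodd (by norm_num : (-1 : ℤ) ^ 2 = 1)
  rwa [cyclotomic_prime ℤ p, eval_geom_sum, neg_one_geom_sum,
    if_neg (Nat.not_even_iff_odd.mpr hodd), mul_one] at h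

theorem totient_four_mul_prime {p : ℕ} (hp : p.Prime) (hodd : Odd p) :
    (4 * p).totient = 2 * p - 2 := by
  have hcop : Nat.Coprime 4 p := Nat.Coprime.pow_left 2 hodd.coprime_two_left
  rw [Nat.totient_mul hcop, Nat.totient_prime hp, show Nat.totient 4 = 2 by decide]
  omega

theorem isPrimitiveRoot_exp_pi_mul_I_div (n : ℕ) (hn : n ≠ 0) :
    IsPrimitiveRoot (Complex.exp (Real.pi * Complex.I / n)) (2 * n) := by
  convert Complex.isPrimitiveRoot_exp (2 * n) (by omega) using 2
  push_cast
  field_simp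

theorem exists_add_reflect_eq_C_mul_X_mul_cyclotomic {p : ℕ} (hp : p.Prime) (hodd : Odd p)
    {ρ : ℤ[X]} (hdeg : ρ.natDegree < 2 * p) (hconst : ρ.coeff 0 = 0)
    (hreal : ∃ r : ℝ, aeval (Complex.exp (Real.pi * Complex.I / (2 * p : ℕ))) ρ = r) :
    ∃ a : ℤ, ρ + reflect (2 * p) ρ = C a * X * cyclotomic (4 * p) ℤ := by
  have hp0 : 0 < 4 * p := by have := hp.pos; omega
  have hprim := isPrimitiveRoot_exp_pi_mul_I_div (2 * p) (by omega)
  rw [← mul_assoc, show 2 * 2 = 4 from rfl] at hprim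
  have hζN := hprim.pow_of_dvd (p := 2 * p) (by omega) ⟨2, by ring⟩
  rw [show 4 * p / (2 * p) = 2 from Nat.div_eq_of_eq_mul_left (by omega) (by ring)] at hζN
  have hdvd : cyclotomic (4 * p) ℤ ∣ ρ + reflect (2 * p) ρ := by
    rw [cyclotomic_eq_minpoly hprim hp0]
    exact minpoly.isIntegrallyClosed_dvd (hprim.isIntegral hp0)
      (aeval_add_reflect_eq_zero (hprim.norm'_eq_one hp0.ne') hζN.eq_neg_one_of_two_right
        hdeg.le hreal)
  refine exists_eq_C_mul_X_mul_of_dvd hdvd ?_ ?_ ?_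
  · rw [cyclotomic_coeff_zero ℤ (by omega)]; exact one_ne_zero
  · rw [coeff_add, coeff_reflect, revAt_zero, hconst, coeff_eq_zero_of_natDegree_lt hdeg, add_zero]
  · rw [natDegree_cyclotomic, totient_four_mul_prime hp hodd]
    have := natDegree_add_reflect_lt hdeg hconst
    omega

theorem four_dvd_of_add_reflect_eq {p : ℕ} (hp : p.Prime) (hodd : Odd p) {ρ : ℤ[X]}
    (hdeg : ρ.natDegree ≤ 2 * p) {a : ℤ}
    (ha : ρ + reflect (2 * p) ρ = C a * X * cyclotomic (4 * p) ℤ)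
    (hmom : 2 ∣ ρ.derivative.eval 1) : 4 ∣ a := by
  have heval : ∀ x : ℤ, x ^ 2 = 1 → 2 * ρ.eval x = a * x := fun x hx => by
    have h := congrArg (aeval x) ha
    rw [map_add, aeval_reflect (by rwa [← sq]) hdeg, map_mul, map_mul, aeval_C, aeval_X,
      aeval_cyclotomic_four_mul, hx, pow_mul, hx, one_pow, one_mul, coe_aeval_eq_eval,
      coe_aeval_eq_eval, eval_one_cyclotomic_two_mul hp hodd] at h
    simpa [two_mul] using h
  have h1 := heval 1 (one_pow 2)
  have h2 := heval (-1) (by norm_num)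
  have := four_dvd_eval_one_sub_eval_neg_one_sub_two_mul_derivative ρ
  omega

theorem natAbs_mul_le_of_add_reflect_eq {p : ℕ} (hp : p.Prime) (hodd : Odd p) {ρ : ℤ[X]}
    (hdeg : ρ.natDegree < 2 * p) {a : ℤ}
    (ha : ρ + reflect (2 * p) ρ = C a * X * cyclotomic (4 * p) ℤ) :
    a.natAbs * p ≤ 2 * ∑ k ∈ range (2 * p), (ρ.coeff k).natAbs := by
  have hI : Complex.I ^ (2 * p) = -1 := by rw [pow_mul, Complex.I_sq, hodd.neg_one_pow]
  have hΦ : aeval Complex.I (cyclotomic (4 * p) ℤ) = p := by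
    rw [aeval_cyclotomic_four_mul, Complex.I_sq, ← map_one (algebraMap ℤ ℂ), ← map_neg,
      aeval_algebraMap_apply_eq_algebraMap_eval, eval_neg_one_cyclotomic_two_mul hp hodd]
    simp
  have h := congrArg (aeval Complex.I) ha
  rw [map_add, aeval_reflect (by rw [mul_neg, Complex.I_mul_I, neg_neg]) hdeg.le, hI,
    map_mul, map_mul, aeval_C, aeval_X, hΦ, neg_one_mul, ← sub_eq_add_neg] at h
  have hnorm : ‖aeval Complex.I ρ - aeval (-Complex.I) ρ‖ = a.natAbs * p := by
    rw [h]
    simp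
  have hbound := norm_sub_le (aeval Complex.I ρ) (aeval (-Complex.I) ρ)
  rw [hnorm] at hbound
  have h1 := norm_aeval_le_sum_natAbs hdeg (z := Complex.I) (by simp)
  have h2 := norm_aeval_le_sum_natAbs hdeg (z := -Complex.I) (by simp)
  exact_mod_cast (by linarith :
    (a.natAbs * p : ℝ) ≤ 2 * ∑ k ∈ range (2 * p), ((ρ.coeff k).natAbs : ℝ))

open Polynomial in
/-- Lower bound on non-pairing-off resonances for `N = 2p`: if `ρ` is an integer
polynomial of degree `< N` with zero constant term, `ρ(ζ) ∈ ℝ` for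
`ζ = exp(iπ/N)`, `ρ'(1) ≡ 0 (mod N)`, and `ρ` is not trivially real, then
`M(ρ) = ∑ |ρ_k| ≥ N`. -/
theorem non_pairing_off_lower_bound (p : ℕ) (hp : p.Prime) (hodd : Odd p)
    (N : ℕ) (hN : N = 2 * p) (ζ : ℂ)
    (hζ : ζ = Complex.exp (Real.pi * Complex.I / N)) (ρ : ℤ[X])
    (hdeg : ρ.natDegree < N) (hconst : ρ.coeff 0 = 0)
    (hreal : ∃ r : ℝ, Polynomial.aeval ζ ρ = (r : ℂ))
    (hmom : (N : ℤ) ∣ ρ.derivative.eval 1)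
    (hnontriv : ¬ ∃ lam : ℕ → ℤ,
      ρ = ∑ k ∈ Finset.Icc 1 (p - 1), C (lam k) * (X ^ k - X ^ (N - k))) :
    N ≤ ∑ k ∈ Finset.range N, (ρ.coeff k).natAbs := by
  subst hN hζ
  obtain ⟨a, ha⟩ := exists_add_reflect_eq_C_mul_X_mul_cyclotomic hp hodd hdeg hconst hreal
  have ha4 : 4 ∣ a :=
    four_dvd_of_add_reflect_eq hp hodd hdeg.le ha (dvd_trans ⟨p, by push_cast; ring⟩ hmom)
  have ha0 : a ≠ 0 := by
    rintro rfl
    exact hnontriv ⟨_, eq_sum_X_pow_sub_X_pow_of_add_reflect_eq_zero hdeg (by simpa using ha)⟩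
  have hbound := natAbs_mul_le_of_add_reflect_eq hp hodd hdeg ha
  have : 4 ≤ a.natAbs := Nat.le_of_dvd (Int.natAbs_pos.mpr ha0) (Int.natAbs_dvd_natAbs.mpr ha4)
  nlinarith
end
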